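/- arXiv:1210.3115 — 3 statements merged into one kernel-verified Lean document; each statement's English description precedes it below -/
import Mathlib

section
/- In λ⟨catch⟩, if v is a value and Γ; Δ ⊢ v : ψ for an arrow-free type ψ, then FCV(v) = ∅, i.e. v contains no free continuation variables. -/
/-! Formalization of the λ⟨catch⟩ calculus (de Bruijn indices for both term
variables and continuation variables). -/

/-- Types: unit, lists, arrows. -/
inductive Ty : Type
  | unit : Ty
  | list : Ty → Ty
  | arrow : Ty → Ty → Ty
  deriving DecidableEq

/-- A type is arrow-free if the arrow constructor does not occur in it. -/
def Ty.ArrowFree : Ty → Prop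
  | .unit => True
  | .list σ => σ.ArrowFree
  | .arrow _ _ => False

/-- Terms of λ⟨catch⟩. Term variables and continuation variables are both
de Bruijn indices (`lam` binds a term variable, `catch` binds a continuation
variable). -/
inductive Tm : Type
  | var : ℕ → Tm
  | unit : Tm
  | nil : Tm
  | cons : Tm
  | lrec : Tm
  | lam : Tm → Tm
  | app : Tm → Tm → Tm
  | catch : Tm → Tm
  | throw : ℕ → Tm → Tm
  deriving DecidableEq

/-- Values of λ⟨catch⟩. -/
inductive IsValue : Tm → Prop
  | var (x) : IsValue (.var x)
  | unit : IsValue .unit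
  | nil : IsValue .nil
  | cons : IsValue .cons
  | cons1 {v} : IsValue v → IsValue (.app .cons v)
  | cons2 {v w} : IsValue v → IsValue w → IsValue (.app (.app .cons v) w)
  | lrec : IsValue .lrec
  | lrec1 {v} : IsValue v → IsValue (.app .lrec v)
  | lrec2 {v w} : IsValue v → IsValue w → IsValue (.app (.app .lrec v) w)
  | lam (t) : IsValue (.lam t)

/-- Boolean version of `IsValue`. -/
def isVal : Tm → Bool
  | .var _ => true
  | .unit => true
  | .nil => true
  | .cons => true
  | .lrec => true
  | .lam _ => true
  | .app .cons v => isVal v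
  | .app .lrec v => isVal v
  | .app (.app .cons v) w => isVal v && isVal w
  | .app (.app .lrec v) w => isVal v && isVal w
  | _ => false

/-- The set of free continuation variables of a term. -/
def FCV : Tm → Set ℕ
  | .var _ => ∅
  | .unit => ∅
  | .nil => ∅
  | .cons => ∅
  | .lrec => ∅
  | .lam t => FCV t
  | .app t s => FCV t ∪ FCV s
  | .catch t => {k | k + 1 ∈ FCV t}
  | .throw a t => insert a (FCV t)

/-- Boolean test whether continuation variable `k` occurs free. -/
def kfree (k : ℕ) : Tm → Bool
  | .var _ => false
  | .unit => false
  | .nil => false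
  | .cons => false
  | .lrec => false
  | .lam t => kfree k t
  | .app t s => kfree k t || kfree k s
  | .catch t => kfree (k + 1) t
  | .throw a t => a == k || kfree k t

/-- Lift a renaming under a binder. -/
def liftF (f : ℕ → ℕ) : ℕ → ℕ
  | 0 => 0
  | n + 1 => f n + 1

/-- Renaming of term variables. -/
def renameTm (f : ℕ → ℕ) : Tm → Tm
  | .var x => .var (f x)
  | .unit => .unit
  | .nil => .nil
  | .cons => .cons
  | .lrec => .lrec
  | .lam t => .lam (renameTm (liftF f) t)
  | .app t s => .app (renameTm f t) (renameTm f s)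
  | .catch t => .catch (renameTm f t)
  | .throw a t => .throw a (renameTm f t)

/-- Renaming of continuation variables. -/
def renameK (f : ℕ → ℕ) : Tm → Tm
  | .var x => .var x
  | .unit => .unit
  | .nil => .nil
  | .cons => .cons
  | .lrec => .lrec
  | .lam t => .lam (renameK f t)
  | .app t s => .app (renameK f t) (renameK f s)
  | .catch t => .catch (renameK (liftF f) t)
  | .throw a t => .throw (f a) (renameK f t)

/-- Lift a parallel term substitution under a `lam` binder. -/
def liftS (σ : ℕ → Tm) : ℕ → Tm
  | 0 => .var 0
  | n + 1 => renameTm Nat.succ (σ n)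

/-- Capture-avoiding parallel substitution of term variables. -/
def subst (σ : ℕ → Tm) : Tm → Tm
  | .var x => σ x
  | .unit => .unit
  | .nil => .nil
  | .cons => .cons
  | .lrec => .lrec
  | .lam t => .lam (subst (liftS σ) t)
  | .app t s => .app (subst σ t) (subst σ s)
  | .catch t => .catch (subst (fun n => renameK Nat.succ (σ n)) t)
  | .throw a t => .throw a (subst σ t)

/-- Capture-avoiding substitution `t[x := r]` of `r` for the term variable
bound at index 0. -/
def subst0 (t r : Tm) : Tm :=
  subst (fun n => match n with | 0 => r | n + 1 => .var n) t

/-- The typing judgment `Γ; Δ ⊢ t : ρ`.  `Γ` assigns types to term variables,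
`Δ` assigns (arrow-free) types to continuation variables. -/
inductive HasTy : List Ty → List Ty → Tm → Ty → Prop
  | var {Γ Δ x ρ} : Γ[x]? = some ρ → HasTy Γ Δ (.var x) ρ
  | unit {Γ Δ} : HasTy Γ Δ .unit .unit
  | nil {Γ Δ σ} : HasTy Γ Δ .nil (.list σ)
  | cons {Γ Δ σ} : HasTy Γ Δ .cons (.arrow σ (.arrow (.list σ) (.list σ)))
  | lrec {Γ Δ ρ σ} :
      HasTy Γ Δ .lrec
        (.arrow ρ (.arrow (.arrow σ (.arrow (.list σ) (.arrow ρ ρ))) (.arrow (.list σ) ρ)))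
  | lam {Γ Δ σ τ t} : HasTy (σ :: Γ) Δ t τ → HasTy Γ Δ (.lam t) (.arrow σ τ)
  | app {Γ Δ σ τ t s} : HasTy Γ Δ t (.arrow σ τ) → HasTy Γ Δ s σ → HasTy Γ Δ (.app t s) τ
  | catch {Γ Δ ψ t} : ψ.ArrowFree → HasTy Γ (ψ :: Δ) t ψ → HasTy Γ Δ (.catch t) ψ
  | throw {Γ Δ a ψ τ t} : Δ[a]? = some ψ → ψ.ArrowFree → HasTy Γ Δ t ψ →
      HasTy Γ Δ (.throw a t) τ

/-- One-step reduction of λ⟨catch⟩: the compatible closure of the basic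
reduction rules. -/
inductive Red : Tm → Tm → Prop
  | beta {t v} : IsValue v → Red (.app (.lam t) v) (subst0 t v)
  | throwAppL {a t s} : Red (.app (.throw a t) s) (.throw a t)
  | throwAppR {v a t} : IsValue v → Red (.app v (.throw a t)) (.throw a t)
  | throwThrow {b a t} : Red (.throw b (.throw a t)) (.throw a t)
  | catch1 {t} : Red (.catch (.throw 0 t)) (.catch t)
  | catch2 {b v} : IsValue v →
      Red (.catch (.throw (b + 1) (renameK Nat.succ v))) (.throw b v)
  | catch3 {v} : IsValue v → Red (.catch (renameK Nat.succ v)) v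
  | lrecNil {vr vs} : IsValue vr → IsValue vs →
      Red (.app (.app (.app .lrec vr) vs) .nil) vr
  | lrecCons {vr vs vh vt} : IsValue vr → IsValue vs → IsValue vh → IsValue vt →
      Red (.app (.app (.app .lrec vr) vs) (.app (.app .cons vh) vt))
          (.app (.app (.app vs vh) vt) (.app (.app (.app .lrec vr) vs) vt))
  | appL {t t' s} : Red t t' → Red (.app t s) (.app t' s)
  | appR {t s s'} : Red s s' → Red (.app t s) (.app t s')
  | lamC {t t'} : Red t t' → Red (.lam t) (.lam t')
  | catchC {t t'} : Red t t' → Red (.catch t) (.catch t')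
  | throwC {a t t'} : Red t t' → Red (.throw a t) (.throw a t')

/-- Compound contexts Ē ::= □ | Ē t | v Ē | throw α Ē. -/
inductive Ctx : Type
  | hole : Ctx
  | appL : Ctx → Tm → Ctx
  | appR : Tm → Ctx → Ctx
  | throw : ℕ → Ctx → Ctx

/-- Filling the hole of a compound context. -/
def Ctx.fill : Ctx → Tm → Tm
  | .hole, s => s
  | .appL E t, s => .app (E.fill s) t
  | .appR v E, s => .app v (E.fill s)
  | .throw a E, s => .throw a (E.fill s)

/-- Well-formedness of a compound context: the terms in `v Ē` positions must
be values. -/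
inductive Ctx.Ok : Ctx → Prop
  | hole : Ctx.Ok .hole
  | appL {E t} : Ctx.Ok E → Ctx.Ok (.appL E t)
  | appR {v E} : IsValue v → Ctx.Ok E → Ctx.Ok (.appR v E)
  | throw {a E} : Ctx.Ok E → Ctx.Ok (.throw a E)

/-- Parallel reduction `t ⇒ t'`. -/
inductive PRed : Tm → Tm → Prop
  | var (x) : PRed (.var x) (.var x)
  | unit : PRed .unit .unit
  | nil : PRed .nil .nil
  | cons : PRed .cons .cons
  | lrec : PRed .lrec .lrec
  | app {t t' r r'} : PRed t t' → PRed r r' → PRed (.app t r) (.app t' r')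
  | lam {t t'} : PRed t t' → PRed (.lam t) (.lam t')
  | catch {t t'} : PRed t t' → PRed (.catch t) (.catch t')
  | beta {t t' v r} : IsValue v → PRed t t' → PRed v r →
      PRed (.app (.lam t) v) (subst0 t' r)
  | throw {E a t t'} : Ctx.Ok E → PRed t t' →
      PRed (E.fill (.throw a t)) (.throw a t')
  | catch1 {t t'} : PRed t t' → PRed (.catch (.throw 0 t)) (.catch t')
  | catch2 {b v t} : IsValue v → PRed v t →
      PRed (.catch (.throw (b + 1) (renameK Nat.succ v))) (.throw b t)
  | catch3 {v t} : IsValue v → PRed v t → PRed (.catch (renameK Nat.succ v)) t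
  | lrecNil {vr vs r} : IsValue vr → IsValue vs → PRed vr r →
      PRed (.app (.app (.app .lrec vr) vs) .nil) r
  | lrecCons {vr vs vh vt r s h t} : IsValue vr → IsValue vs → IsValue vh → IsValue vt →
      PRed vr r → PRed vs s → PRed vh h → PRed vt t →
      PRed (.app (.app (.app .lrec vr) vs) (.app (.app .cons vh) vt))
           (.app (.app (.app s h) t) (.app (.app (.app .lrec r) s) t))

/-- Parallel reduction on compound contexts. -/
inductive CPred : Ctx → Ctx → Prop
  | hole : CPred .hole .hole
  | throwHole (a) : CPred (.throw a .hole) .hole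
  | appL {E F t t'} : CPred E F → PRed t t' → CPred (.appL E t) (.appL F t')
  | appR {v t E F} : IsValue v → CPred E F → PRed v t → CPred (.appR v E) (.appR t F)
  | throw {a E F} : CPred E F → CPred (.throw a E) (.throw a F)
  | throwThrow {b a E F} : CPred E F → CPred (.throw b (.throw a E)) (.throw a F)

/-- Size of a term. -/
def Tm.size : Tm → ℕ
  | .var _ => 1
  | .unit => 1
  | .nil => 1
  | .cons => 1
  | .lrec => 1
  | .lam t => t.size + 1
  | .app t s => t.size + s.size + 1
  | .catch t => t.size + 1
  | .throw _ t => t.size + 1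

theorem size_renameK (f : ℕ → ℕ) (t : Tm) : (renameK f t).size = t.size := by
  induction t generalizing f <;> simp [renameK, Tm.size, *]

/-- Does the term have the shape `throw a t`? -/
def isThrow : Tm → Bool
  | .throw _ _ => true
  | _ => false

/-- Does the term have the shape `Ē[throw a q]` for some compound context `Ē`? -/
def hasThrow : Tm → Bool
  | .throw _ _ => true
  | .app t s => hasThrow t || (isVal t && hasThrow s)
  | _ => false

/-- The complete development `t*` of a term `t`: all redexes of `t` are
contracted simultaneously. -/
def cd : Tm → Tm
  | .var x => .var x
  | .unit => .unit
  | .nil => .nil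
  | .cons => .cons
  | .lrec => .lrec
  | .lam t => .lam (cd t)
  | .throw a t => if isThrow t then cd t else .throw a (cd t)
  | .catch t =>
    match t with
    | .throw 0 q => .catch (cd q)
    | .throw (b + 1) u =>
        if isVal u && !kfree 0 u then .throw b (cd (renameK Nat.pred u))
        else .catch (cd (.throw (b + 1) u))
    | u =>
        if isVal u && !kfree 0 u then cd (renameK Nat.pred u)
        else .catch (cd u)
  | .app t s =>
    if hasThrow t then cd t
    else if isVal t && hasThrow s then cd s
    else match t, s with
      | .lam t', v => if isVal v then subst0 (cd t') (cd v) else .app (cd (.lam t')) (cd v)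
      | .app (.app .lrec vr) vs, .nil =>
          if isVal vr && isVal vs then cd vr
          else .app (cd (.app (.app .lrec vr) vs)) (cd .nil)
      | .app (.app .lrec vr) vs, .app (.app .cons vh) vt =>
          if isVal vr && isVal vs && isVal vh && isVal vt then
            .app (.app (.app (cd vs) (cd vh)) (cd vt))
                 (.app (.app (.app .lrec (cd vr)) (cd vs)) (cd vt))
          else .app (cd (.app (.app .lrec vr) vs)) (cd (.app (.app .cons vh) vt))
      | t, s => .app (cd t) (cd s)
  termination_by t => t.size
  decreasing_by all_goals (simp_all [Tm.size, size_renameK] <;> omega)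

/-- Strong normalization: every reduction sequence from `t` is finite. -/
def SN (t : Tm) : Prop := Acc (fun a b => Red b a) t

/-- The list interpretation `[S]` of a set of terms `S`. -/
inductive ListInt (S : Set Tm) : Tm → Prop
  | mk {t} :
      (∀ v w, IsValue v → IsValue w →
        Relation.ReflTransGen Red t (.app (.app .cons v) w) → v ∈ S) →
      (∀ v w, IsValue v → IsValue w →
        Relation.ReflTransGen Red t (.app (.app .cons v) w) → ListInt S w) →
      ListInt S t

/-- The reducibility interpretation `⟦σ⟧` of a type. -/
def interp : Ty → Set Tm
  | .unit => {t | SN t}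
  | .list σ => {t | SN t ∧ ListInt (interp σ) t}
  | .arrow σ τ => {t | ∀ s ∈ interp σ, Tm.app t s ∈ interp τ}

/-- A term is neutral if it is not of the shape `λx.r`, `lrec v_r v_s`, or
`cons v w`. -/
def Neutral (t : Tm) : Prop :=
  (∀ r, t ≠ .lam r) ∧
  (∀ vr vs, IsValue vr → IsValue vs → t ≠ .app (.app .lrec vr) vs) ∧
  (∀ v w, IsValue v → IsValue w → t ≠ .app (.app .cons v) w)

/-- Iterated application `t u₁ ⋯ uₙ`. -/
def appList (t : Tm) (us : List Tm) : Tm := us.foldl .app t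

/-- The term `cons w₁ (cons … (cons wₙ nil))`. -/
def listEnc : List Tm → Tm
  | [] => .nil
  | w :: ws => .app (.app .cons w) (listEnc ws)

/-! Abstractions and the partial applications `cons`, `cons v`, `lrec`, `lrec v`, `lrec v w`
all have arrow types, so a value of arrow-free type is a variable, `()`, `nil`, or a cell
`cons v w` whose components again have arrow-free types `σ` and `list σ`. -/

theorem Ty.not_arrowFree_arrow (σ τ : Ty) : ¬ (Ty.arrow σ τ).ArrowFree := id

namespace HasTy

variable {Γ Δ : List Ty} {ρ : Ty} {v w : Tm}

theorem lam_inv {t : Tm} (h : HasTy Γ Δ (.lam t) ρ) : ∃ σ τ, ρ = .arrow σ τ := by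
  cases h
  exact ⟨_, _, rfl⟩

theorem cons_app_inv (h : HasTy Γ Δ (.app .cons v) ρ) :
    ∃ σ, ρ = .arrow (.list σ) (.list σ) ∧ HasTy Γ Δ v σ := by
  rcases h with _ | _ | _ | _ | _ | _ | ⟨hcons, hv⟩
  cases hcons
  exact ⟨_, rfl, hv⟩

theorem cons_app_app_inv (h : HasTy Γ Δ (.app (.app .cons v) w) ρ) :
    ∃ σ, ρ = .list σ ∧ HasTy Γ Δ v σ ∧ HasTy Γ Δ w (.list σ) := by
  rcases h with _ | _ | _ | _ | _ | _ | ⟨hcons, hw⟩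
  obtain ⟨σ, hσ, hv⟩ := hcons.cons_app_inv
  cases hσ
  exact ⟨σ, rfl, hv, hw⟩

theorem lrec_app_inv (h : HasTy Γ Δ (.app .lrec v) ρ) : ∃ σ τ, ρ = .arrow σ τ := by
  rcases h with _ | _ | _ | _ | _ | _ | ⟨hlrec, -⟩
  cases hlrec
  exact ⟨_, _, rfl⟩

theorem lrec_app_app_inv (h : HasTy Γ Δ (.app (.app .lrec v) w) ρ) :
    ∃ σ τ, ρ = .arrow σ τ := by
  rcases h with _ | _ | _ | _ | _ | _ | ⟨hlrec, -⟩
  rcases hlrec with _ | _ | _ | _ | _ | _ | ⟨hlrec, -⟩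
  cases hlrec
  exact ⟨_, _, rfl⟩

end HasTy

/-- A well-typed value of arrow-free type has no free continuation variables. -/
theorem value_fcv_empty {Γ Δ : List Ty} {v : Tm} {ψ : Ty}
    (hv : IsValue v) (hψ : ψ.ArrowFree) (ht : HasTy Γ Δ v ψ) :
    FCV v = ∅ := by
  induction hv generalizing ψ with
  | var | unit | nil | cons | lrec => rfl
  | lam =>
    obtain ⟨σ, τ, rfl⟩ := ht.lam_inv
    exact (Ty.not_arrowFree_arrow σ τ hψ).elim
  | cons1 =>
    obtain ⟨σ, rfl, -⟩ := ht.cons_app_inv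
    exact (Ty.not_arrowFree_arrow _ _ hψ).elim
  | lrec1 =>
    obtain ⟨σ, τ, rfl⟩ := ht.lrec_app_inv
    exact (Ty.not_arrowFree_arrow σ τ hψ).elim
  | lrec2 =>
    obtain ⟨σ, τ, rfl⟩ := ht.lrec_app_app_inv
    exact (Ty.not_arrowFree_arrow σ τ hψ).elim
  | cons2 _ _ ihv ihw =>
    obtain ⟨σ, rfl, hv, hw⟩ := ht.cons_app_app_inv
    simp only [FCV, ihv (ψ := σ) hψ hv, ihw hψ hw, Set.union_empty]
end

section
/- In λ⟨catch⟩, for every arrow-free type ψ, every strongly normalizing term is reducible at ψ: SN ⊆ ⟦ψ⟧. -/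
/-! At an arrow-free type the interpretation only adds the list condition `[S]` to strong
normalization. A strongly normalizing term can reduce to `cons v w` only with `v` and `w`
strongly normalizing, and a value reduces to a `cons` cell only if it already is one, so the
tails of such a cell can be unfolded by structural recursion on the value. -/

open Relation

lemma SN.of_map {f : Tm → Tm} (hf : ∀ {t u}, Red t u → Red (f t) (f u)) {t : Tm}
    (h : SN (f t)) : SN t :=
  Subrelation.accessible hf (InvImage.accessible f h)

lemma SN.of_app_left {t s : Tm} (h : SN (.app t s)) : SN t :=
  SN.of_map (f := (.app · s)) Red.appL h

lemma SN.of_app_right {t s : Tm} (h : SN (.app t s)) : SN s :=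
  SN.of_map Red.appR h

lemma SN.of_reds {t u : Tm} (h : SN t) (r : ReflTransGen Red t u) : SN u := by
  induction r with
  | refl => exact h
  | tail _ r ih => exact ih.inv r

lemma IsValue.red {w u : Tm} (hw : IsValue w) (h : Red w u) : IsValue u := by
  induction hw generalizing u with
  | var | unit | nil | cons | lrec => cases h
  | lam => cases h; exact .lam _
  | cons1 hv ih | lrec1 hv ih =>
    cases h with
    | throwAppR => cases hv
    | appL h => cases h
    | appR h => first | exact .cons1 (ih h) | exact .lrec1 (ih h)
  | cons2 hv hw ihv ihw | lrec2 hv hw ihv ihw =>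
    cases h with
    | throwAppR => cases hw
    | appL h =>
      cases h with
      | throwAppR => cases hv
      | appL h => cases h
      | appR h => first | exact .cons2 (ihv h) hw | exact .lrec2 (ihv h) hw
    | appR h => first | exact .cons2 hv (ihw h) | exact .lrec2 hv (ihw h)

lemma IsValue.eq_cons_of_red {w v x : Tm} (hw : IsValue w) (h : Red w (.app (.app .cons v) x)) :
    ∃ a b, w = .app (.app .cons a) b ∧ ReflTransGen Red a v ∧ ReflTransGen Red b x := by
  cases hw with
  | cons2 =>
    cases h with
    | appL h =>
      cases h with
      | appL h => cases h
      | appR h => exact ⟨_, _, rfl, .single h, .refl⟩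
    | appR h => exact ⟨_, _, rfl, .refl, .single h⟩
  | cons1 | lrec1 => cases h with | appL h => cases h
  | lrec2 => cases h with | appL h => cases h with | appL h => cases h
  | _ => cases h

lemma IsValue.eq_cons_of_reds {w v x : Tm} (hw : IsValue w)
    (h : ReflTransGen Red w (.app (.app .cons v) x)) :
    ∃ a b, w = .app (.app .cons a) b ∧ ReflTransGen Red a v ∧ ReflTransGen Red b x := by
  induction h using ReflTransGen.head_induction_on with
  | refl => exact ⟨v, x, rfl, .refl, .refl⟩
  | head r _ ih =>
    obtain ⟨a', b', rfl, ha', hb'⟩ := ih (hw.red r)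
    obtain ⟨a, b, rfl, ha, hb⟩ := hw.eq_cons_of_red r
    exact ⟨a, b, rfl, ha.trans ha', hb.trans hb'⟩

lemma ListInt.of_reds {S : Set Tm} {t u : Tm} (h : ListInt S t) (r : ReflTransGen Red t u) :
    ListInt S u :=
  let ⟨hhead, htail⟩ := h
  ⟨fun v w hv hw r' => hhead v w hv hw (r.trans r'),
    fun v w hv hw r' => htail v w hv hw (r.trans r')⟩

theorem listInt_of_isValue {S : Set Tm} (hS : {t | SN t} ⊆ S) {w : Tm} (hw : IsValue w)
    (hsn : SN w) : ListInt S w := by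
  refine ⟨fun v x _ _ hr => ?_, fun v x _ _ hr => ?_⟩ <;>
    obtain ⟨a, b, rfl, ha, hb⟩ := hw.eq_cons_of_reds hr
  · exact hS (hsn.of_app_left.of_app_right.of_reds ha)
  · cases hw with
    | cons2 _ hb' => exact (listInt_of_isValue hS hb' hsn.of_app_right).of_reds hb
termination_by w

theorem listInt_of_sn {S : Set Tm} (hS : {t | SN t} ⊆ S) {t : Tm} (h : SN t) : ListInt S t :=
  ⟨fun _ _ _ _ r => hS (h.of_reds r).of_app_left.of_app_right,
    fun _ _ _ hw r => listInt_of_isValue hS hw (h.of_reds r).of_app_right⟩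

/-- For arrow-free types, every strongly normalizing term is reducible. -/
theorem sn_subset_interp_arrowFree {ψ : Ty} (hψ : ψ.ArrowFree) :
    {t : Tm | SN t} ⊆ interp ψ := by
  induction ψ with
  | unit => exact fun _ ht => ht
  | list σ ih => exact fun _ ht => ⟨ht, listInt_of_sn (ih hψ) ht⟩
  | arrow => exact hψ.elim
end

section
/- In λ⟨catch⟩, for every type σ: (1) ⟦σ⟧ ⊆ SN; and (2) for every term variable x and every finite sequence of strongly normalizing terms u₁,…,uₙ, the applied term x u₁ ⋯ uₙ is in ⟦σ⟧. -/
/-! Simultaneous induction on `σ`, as in Tait's method. A variable applied to strongly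
normalizing arguments is *inert*: it only reduces inside its arguments, or collapses to
`throw α t` when an argument becomes one, and neither step creates a head redex or a `cons`.
So such a term is strongly normalizing and lies vacuously in every list interpretation.
For `t ∈ ⟦σ → τ⟧`, the variable `x` lies in `⟦σ⟧`, so `t x ∈ ⟦τ⟧ ⊆ SN` and hence `t ∈ SN`. -/

namespace SN

theorem of_red {t t' : Tm} (h : SN t) (r : Red t t') : SN t' := h.inv r

theorem of_app_left_s14 {t s : Tm} (h : SN (.app t s)) : SN t :=
  Subrelation.accessible (fun r => Red.appL r) (InvImage.accessible (fun t => Tm.app t s) h)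

theorem of_throw {a : ℕ} {t : Tm} (h : SN (.throw a t)) : SN t :=
  Subrelation.accessible (fun r => Red.throwC r) (InvImage.accessible (Tm.throw a) h)

theorem throw {a : ℕ} {t : Tm} (h : SN t) : SN (.throw a t) := by
  induction h with
  | intro t ht ih =>
    refine Acc.intro _ fun t' r => ?_
    cases r with
    | throwThrow => exact Acc.intro _ ht
    | throwC r => exact ih _ r

end SN

inductive Inert : Tm → Prop
  | var (x : ℕ) : Inert (.var x)
  | throw {a : ℕ} {t : Tm} : SN t → Inert (.throw a t)
  | app {t u : Tm} : Inert t → SN u → Inert (.app t u)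

namespace Inert

theorem not_lam_app {t u : Tm} (h : Inert (.app (.lam t) u)) : False := by
  cases h with | app h _ => cases h

theorem not_lrec_app {vr vs u : Tm} (h : Inert (.app (.app (.app .lrec vr) vs) u)) : False := by
  cases h with | app h _ => cases h with | app h _ => cases h with | app h _ => cases h

theorem not_cons_app {v w : Tm} (h : Inert (.app (.app .cons v) w)) : False := by
  cases h with | app h _ => cases h with | app h _ => cases h

theorem red {t t' : Tm} (h : Inert t) (r : Red t t') : Inert t' := by
  induction h generalizing t' with
  | var x => cases r
  | throw hsn =>
    cases r with
    | throwThrow => exact .throw hsn.of_throw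
    | throwC r => exact .throw (hsn.of_red r)
  | app ht hu ih =>
    cases r with
    | beta => exact (Inert.app ht hu).not_lam_app.elim
    | throwAppL => exact ht
    | throwAppR => exact .throw hu.of_throw
    | lrecNil => exact (Inert.app ht hu).not_lrec_app.elim
    | lrecCons => exact (Inert.app ht hu).not_lrec_app.elim
    | appL r => exact .app (ih r) hu
    | appR r => exact .app ht (hu.of_red r)

theorem reds {t t' : Tm} (h : Inert t) (r : Relation.ReflTransGen Red t t') : Inert t' := by
  induction r with
  | refl => exact h
  | tail _ r ih => exact ih.red r

theorem sn_app {t u : Tm} (h : Inert t) (ht : SN t) (hu : SN u) : SN (.app t u) := by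
  induction ht generalizing u with
  | intro t ht iht =>
    induction hu with
    | intro u hu ihu =>
      have happ : Inert (.app t u) := .app h (Acc.intro u hu)
      refine Acc.intro _ fun t' r => ?_
      cases r with
      | beta => exact happ.not_lam_app.elim
      | throwAppL => exact Acc.intro _ ht
      | throwAppR => exact Acc.intro _ hu
      | lrecNil => exact happ.not_lrec_app.elim
      | lrecCons => exact happ.not_lrec_app.elim
      | appL r => exact iht _ r (h.red r) (Acc.intro u hu)
      | appR r => exact ihu _ r

theorem sn {t : Tm} (h : Inert t) : SN t := by
  induction h with
  | var x => exact Acc.intro _ fun _ r => nomatch r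
  | throw hsn => exact hsn.throw
  | app ht hu ih => exact ht.sn_app ih hu

theorem listInt (S : Set Tm) {t : Tm} (h : Inert t) : ListInt S t :=
  ⟨fun _ _ _ _ r => (h.reds r).not_cons_app.elim,
   fun _ _ _ _ r => (h.reds r).not_cons_app.elim⟩

theorem appList {t : Tm} (h : Inert t) {us : List Tm} (hus : ∀ u ∈ us, SN u) :
    Inert (appList t us) := by
  induction us generalizing t with
  | nil => exact h
  | cons u us ih =>
    exact ih (.app h (hus u List.mem_cons_self)) fun v hv => hus v (List.mem_cons_of_mem u hv)

end Inert

theorem appList_append_singleton (t s : Tm) (us : List Tm) :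
    appList t (us ++ [s]) = .app (appList t us) s :=
  List.foldl_append

/-- Reducible terms are strongly normalizing, and a variable applied to a
sequence of strongly normalizing terms is reducible at every type. -/
theorem interp_sn_and_var_app (σ : Ty) :
    interp σ ⊆ {t : Tm | SN t} ∧
    (∀ (x : ℕ) (us : List Tm), (∀ u ∈ us, SN u) →
      appList (Tm.var x) us ∈ interp σ) := by
  induction σ with
  | unit => exact ⟨fun _ ht => ht, fun x _ hus => ((Inert.var x).appList hus).sn⟩
  | list σ =>
    refine ⟨fun _ ht => ht.1, fun x _ hus => ?_⟩
    have hinert := (Inert.var x).appList hus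
    exact ⟨hinert.sn, hinert.listInt _⟩
  | arrow σ τ ihσ ihτ =>
    refine ⟨fun t ht => ?_, fun x us hus s hs => ?_⟩
    · have hvar : Tm.var 0 ∈ interp σ := ihσ.2 0 [] nofun
      exact SN.of_app_left_s14 (ihτ.1 (ht _ hvar))
    · rw [← appList_append_singleton]
      refine ihτ.2 x _ fun u hu => ?_
      rcases List.mem_append.1 hu with hu | hu
      · exact hus u hu
      · exact List.eq_of_mem_singleton hu ▸ ihσ.1 hs
end
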